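/- The class of degeneracy quotients of simplicial sets is stable under pullback: if p : A ⟶ B is a degeneracy quotient and g : B' ⟶ B is any morphism of simplicial sets, then the projection A ×_B B' ⟶ B' is again a degeneracy quotient. -/

import Mathlib

open CategoryTheory CategoryTheory.Limits Simplicial SSet Opposite


/-- A cell `x ∈ X_n` is `σ`-degenerate, for `σ : [n] → [m]` an epimorphism of the simplex
category, if `x = X(σ)(y)` for some `y ∈ X_m`. -/
def IsSigmaDegenerate (X : SSet.{0}) {n m : SimplexCategory} (σ : n ⟶ m)
    (x : X.obj (op n)) : Prop :=
  ∃ y : X.obj (op m), x = X.map σ.op y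

/-- A cell is degenerate if it is `σ`-degenerate for some non-identity epimorphism `σ`
(in the simplex category an epimorphism is an identity iff it is an isomorphism). -/
def IsDegenerate (X : SSet.{0}) {n : SimplexCategory} (x : X.obj (op n)) : Prop :=
  ∃ (m : SimplexCategory) (σ : n ⟶ m), Epi σ ∧ ¬IsIso σ ∧ IsSigmaDegenerate X σ x

/-- A morphism of simplicial sets is degeneracy detecting if every cell whose image is
degenerate is itself degenerate. -/
def DegeneracyDetecting {X Y : SSet.{0}} (f : X ⟶ Y) : Prop :=
  ∀ (n : SimplexCategory) (x : X.obj (op n)),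
    IsDegenerate Y (f.app (op n) x) → IsDegenerate X x

/-- A degeneracy quotient: a morphism with the unique left lifting property with respect
to every degeneracy detecting morphism. -/
def DegeneracyQuotient {X Z : SSet.{0}} (q : X ⟶ Z) : Prop :=
  ∀ ⦃A B : SSet.{0}⦄ (g : A ⟶ B), DegeneracyDetecting g →
    ∀ (u : X ⟶ A) (v : Z ⟶ B), u ≫ g = q ≫ v →
      ∃! l : Z ⟶ A, q ≫ l = u ∧ l ≫ g = v

namespace DQAux

open SimplexCategory

/-- minimal element of the fiber of a surjective monotone map -/
noncomputable def fmin {n m : SimplexCategory} (α : n ⟶ m) (hs : Function.Surjective α.toOrderHom)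
    (j : Fin (m.len + 1)) : Fin (n.len + 1) :=
  (Finset.univ.filter fun k => α.toOrderHom k = j).min'
    (by obtain ⟨k, hk⟩ := hs j; exact ⟨k, by simp [hk]⟩)

lemma fmin_spec {n m : SimplexCategory} (α : n ⟶ m) (hs : Function.Surjective α.toOrderHom)
    (j : Fin (m.len + 1)) : α.toOrderHom (fmin α hs j) = j := by
  have := (Finset.univ.filter fun k => α.toOrderHom k = j).min'_mem
    (by obtain ⟨k, hk⟩ := hs j; exact ⟨k, by simp [hk]⟩)
  simpa [fmin] using this

lemma fmin_le {n m : SimplexCategory} (α : n ⟶ m) (hs : Function.Surjective α.toOrderHom)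
    {j : Fin (m.len + 1)} {k : Fin (n.len + 1)} (hk : α.toOrderHom k = j) : fmin α hs j ≤ k :=
  Finset.min'_le _ _ (by simp [hk])

noncomputable def fmax {n m : SimplexCategory} (α : n ⟶ m) (hs : Function.Surjective α.toOrderHom)
    (j : Fin (m.len + 1)) : Fin (n.len + 1) :=
  (Finset.univ.filter fun k => α.toOrderHom k = j).max'
    (by obtain ⟨k, hk⟩ := hs j; exact ⟨k, by simp [hk]⟩)

lemma fmax_spec {n m : SimplexCategory} (α : n ⟶ m) (hs : Function.Surjective α.toOrderHom)
    (j : Fin (m.len + 1)) : α.toOrderHom (fmax α hs j) = j := by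
  have := (Finset.univ.filter fun k => α.toOrderHom k = j).max'_mem
    (by obtain ⟨k, hk⟩ := hs j; exact ⟨k, by simp [hk]⟩)
  simpa [fmax] using this

lemma le_fmax {n m : SimplexCategory} (α : n ⟶ m) (hs : Function.Surjective α.toOrderHom)
    {j : Fin (m.len + 1)} {k : Fin (n.len + 1)} (hk : α.toOrderHom k = j) : k ≤ fmax α hs j :=
  Finset.le_max' _ _ (by simp [hk])

/-- A section of an epimorphism in the simplex category passing through a prescribed point. -/
lemma exists_section_through {n m : SimplexCategory} (α : n ⟶ m) (hα : Epi α)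
    (t : Fin (n.len + 1)) :
    ∃ s : m ⟶ n, s ≫ α = 𝟙 m ∧ s.toOrderHom (α.toOrderHom t) = t := by
  have hs : Function.Surjective α.toOrderHom := epi_iff_surjective.mp hα
  set f := α.toOrderHom with hf
  set sf : Fin (m.len + 1) → Fin (n.len + 1) := fun j =>
    if j < f t then fmin α hs j else if j = f t then t else fmax α hs j with hsf
  have hfs : ∀ j, f (sf j) = j := by
    intro j
    by_cases h1 : j < f t
    · simp only [hsf, if_pos h1]; exact fmin_spec α hs j
    · by_cases h2 : j = f t
      · simp only [hsf, if_neg h1, if_pos h2]; exact h2.symm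
      · simp only [hsf, if_neg h1, if_neg h2]; exact fmax_spec α hs j
  have mono : Monotone sf := by
    intro j j' hjj'
    by_contra hc
    push_neg at hc
    have := f.monotone hc.le
    rw [hfs, hfs] at this
    rcases eq_or_lt_of_le hjj' with rfl | hlt
    · exact absurd rfl (ne_of_lt hc)
    · exact absurd hlt (not_lt.mpr this)
  refine ⟨SimplexCategory.Hom.mk ⟨sf, mono⟩, ?_, ?_⟩
  · apply SimplexCategory.Hom.ext
    ext j : 3
    exact congrArg Fin.val (hfs j)
  · show sf (f t) = t
    simp [hsf]


/-! ## Acting with simplex category morphisms on cells -/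

def act {X : SSet.{0}} {a b : SimplexCategory} (x : X.obj (op b)) (φ : a ⟶ b) : X.obj (op a) :=
  X.map φ.op x

lemma act_act {X : SSet.{0}} {a b c : SimplexCategory} (x : X.obj (op c)) (φ : b ⟶ c)
    (ψ : a ⟶ b) : act (act x φ) ψ = act x (ψ ≫ φ) := by
  show X.map ψ.op (X.map φ.op x) = X.map (ψ ≫ φ).op x
  rw [op_comp, FunctorToTypes.map_comp_apply]

lemma act_id {X : SSet.{0}} {a : SimplexCategory} (x : X.obj (op a)) : act x (𝟙 a) = x := by
  simp [act]

lemma act_nat {X Y : SSet.{0}} (f : X ⟶ Y) {a b : SimplexCategory} (x : X.obj (op b))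
    (φ : a ⟶ b) : f.app (op a) (act x φ) = act (f.app (op b) x) φ :=
  NatTrans.naturality_apply f φ.op x

lemma sigmaDeg_iff_fix {X : SSet.{0}} {n m : SimplexCategory} (ρ : n ⟶ m) (d : m ⟶ n)
    (hd : d ≫ ρ = 𝟙 m) (x : X.obj (op n)) :
    IsSigmaDegenerate X ρ x ↔ x = act (act x d) ρ := by
  constructor
  · rintro ⟨y, rfl⟩
    show act y ρ = act (act (act y ρ) d) ρ
    rw [act_act, act_act, Category.assoc, hd, Category.comp_id]
  · intro h
    exact ⟨act x d, h⟩

lemma act_absorb {X : SSet.{0}} {n m c : SimplexCategory} {ρ : c ⟶ m} {d : m ⟶ c}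
    (hd : d ≫ ρ = 𝟙 m) {x : X.obj (op c)} (hx : IsSigmaDegenerate X ρ x) (θ : n ⟶ c) :
    act x (θ ≫ ρ ≫ d) = act x θ := by
  obtain ⟨z, rfl⟩ := hx
  show act (act z ρ) _ = act (act z ρ) θ
  rw [act_act, act_act, Category.assoc, Category.assoc, hd, Category.comp_id]

/-! ## Epimorphisms in the simplex category -/

lemma epi_len_lt {n m : SimplexCategory} (ρ : n ⟶ m) (hρ : Epi ρ) (hni : ¬IsIso ρ) :
    m.len < n.len := by
  rcases lt_or_eq_of_le (len_le_of_epi ρ) with h | h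
  · exact h
  · obtain rfl : m = n := SimplexCategory.ext h
    refine absurd ?_ hni
    rw [eq_id_of_epi ρ]
    infer_instance

lemma sigma_not_isIso {k : ℕ} (i : Fin (k + 1)) : ¬IsIso (SimplexCategory.σ i) := by
  intro h
  have hmono : Function.Injective (SimplexCategory.σ i).toOrderHom :=
    mono_iff_injective.mp inferInstance
  have : (SimplexCategory.σ i).toOrderHom i.castSucc = (SimplexCategory.σ i).toOrderHom i.succ := by
    show i.predAbove i.castSucc = i.predAbove i.succ
    rw [Fin.predAbove_castSucc_self, Fin.predAbove_succ_self]
  exact absurd (hmono this) (Fin.castSucc_lt_succ (i := i)).ne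

lemma exists_sigma_factor {a c : SimplexCategory} (φ : a ⟶ c)
    (h : ¬Function.Injective φ.toOrderHom) :
    ∃ (k : ℕ) (ρ : a ⟶ (⦋k⦌ : SimplexCategory)) (γ : (⦋k⦌ : SimplexCategory) ⟶ c)
      (d : (⦋k⦌ : SimplexCategory) ⟶ a),
      φ = ρ ≫ γ ∧ d ≫ ρ = 𝟙 (⦋k⦌ : SimplexCategory) ∧ Epi ρ ∧ ¬IsIso ρ := by
  induction a using SimplexCategory.rec with | _ N =>
  match N with
  | 0 =>
    refine absurd (fun x y _ => ?_) h
    have hx : (x : ℕ) < 1 := by simpa using x.isLt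
    have hy : (y : ℕ) < 1 := by simpa using y.isLt
    exact Fin.ext (by omega)
  | (k + 1) =>
    obtain ⟨i, θ', hθ⟩ := SimplexCategory.eq_σ_comp_of_not_injective φ h
    exact ⟨k, SimplexCategory.σ i, θ', SimplexCategory.δ i.castSucc, hθ,
      SimplexCategory.δ_comp_σ_self, inferInstance, sigma_not_isIso i⟩

lemma injective_of_nondeg {X : SSet.{0}} {a c : SimplexCategory} (x : X.obj (op a))
    (hx : ¬IsDegenerate X x) (y : X.obj (op c)) (φ : a ⟶ c) (hxy : x = act y φ) :
    Function.Injective φ.toOrderHom := by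
  by_contra h
  obtain ⟨k, ρ, γ, d, hfac, hd, hepi, hni⟩ := exists_sigma_factor φ h
  refine hx ⟨⦋k⦌, ρ, hepi, hni, act y γ, ?_⟩
  show x = act (act y γ) ρ
  rw [act_act, ← hfac, hxy]

/-! ## Eilenberg-Zilber: existence of a decomposition via a nondegenerate cell -/

lemma ez_exists_aux {X : SSet.{0}} (N : ℕ) :
    ∀ (n : SimplexCategory), n.len ≤ N → ∀ (x : X.obj (op n)),
    ∃ (m : SimplexCategory) (α : n ⟶ m) (x₀ : X.obj (op m)),
      Epi α ∧ ¬IsDegenerate X x₀ ∧ x = act x₀ α := by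
  induction N with
  | zero =>
    intro n hn x
    refine ⟨n, 𝟙 n, x, inferInstance, ?_, (act_id x).symm⟩
    rintro ⟨m, ρ, hepi, hni, -⟩
    have := epi_len_lt ρ hepi hni
    omega
  | succ N IH =>
    intro n hn x
    by_cases hx : IsDegenerate X x
    · obtain ⟨m, ρ, hepi, hni, y, hy⟩ := hx
      have hlt := epi_len_lt ρ hepi hni
      obtain ⟨b, β, y₀, hβ, hy₀, hyy⟩ := IH m (by omega) y
      refine ⟨b, ρ ≫ β, y₀, epi_comp _ _, hy₀, ?_⟩
      rw [← act_act, ← hyy]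
      exact hy
    · exact ⟨n, 𝟙 n, x, inferInstance, hx, (act_id x).symm⟩

lemma ez_exists {X : SSet.{0}} {n : SimplexCategory} (x : X.obj (op n)) :
    ∃ (m : SimplexCategory) (α : n ⟶ m) (x₀ : X.obj (op m)),
      Epi α ∧ ¬IsDegenerate X x₀ ∧ x = act x₀ α :=
  ez_exists_aux n.len n le_rfl x

/-! ## Cancellation against a nondegenerate cell, and the key reflection lemma -/

lemma cancel_of_nondeg {X : SSet.{0}} {n a : SimplexCategory} (x₀ : X.obj (op a))
    (hx₀ : ¬IsDegenerate X x₀) (α ν : n ⟶ a) (hα : Epi α)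
    (h : act x₀ α = act x₀ ν) : ν = α := by
  apply SimplexCategory.Hom.ext
  ext t : 2
  obtain ⟨s, hsα, hst⟩ := exists_section_through α hα t
  have hx : x₀ = act x₀ (s ≫ ν) := by
    have := congrArg (fun z => act z s) h
    simpa only [act_act, hsα, act_id] using this
  have hmono : Mono (s ≫ ν) :=
    mono_iff_injective.mpr (injective_of_nondeg x₀ hx₀ x₀ (s ≫ ν) hx)
  haveI := hmono
  have hid : s ≫ ν = 𝟙 a := eq_id_of_mono (s ≫ ν)
  have := congrArg (fun ψ : a ⟶ a => SimplexCategory.Hom.toOrderHom ψ (α.toOrderHom t)) hid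
  simp only [SimplexCategory.comp_toOrderHom, OrderHom.comp_coe, Function.comp_apply,
    SimplexCategory.id_toOrderHom, OrderHom.id_coe, id_eq, hst] at this
  exact this

lemma detecting_reflects_sigma {Xf Yf : SSet.{0}} (f : Xf ⟶ Yf) (hf : DegeneracyDetecting f)
    {n m : SimplexCategory} (ρ : n ⟶ m) (hρ : Epi ρ) (x : Xf.obj (op n))
    (h : IsSigmaDegenerate Yf ρ (f.app (op n) x)) : IsSigmaDegenerate Xf ρ x := by
  obtain ⟨a, α, x₀, hα, hx₀, hx⟩ := ez_exists x
  have hfx₀ : ¬IsDegenerate Yf (f.app (op a) x₀) := fun hdeg => hx₀ (hf a x₀ hdeg)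
  obtain ⟨d, hd, -⟩ := exists_section_through ρ hρ 0
  obtain ⟨w, hw⟩ := h
  have hfx : f.app (op n) x = act (f.app (op a) x₀) α := by rw [hx, act_nat]
  have h1 : act (f.app (op n) x) d = w := by
    rw [hw]
    show act (act w ρ) d = w
    rw [act_act, hd, act_id]
  have hw' : (w : Yf.obj (op m)) = act (f.app (op a) x₀) (d ≫ α) := by
    rw [← h1, hfx, act_act]
  have heq : act (f.app (op a) x₀) α = act (f.app (op a) x₀) (ρ ≫ d ≫ α) := by
    rw [← hfx, hw]
    show act w ρ = _
    rw [hw', act_act]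
  have hcan : ρ ≫ d ≫ α = α := cancel_of_nondeg _ hfx₀ α (ρ ≫ d ≫ α) hα heq
  refine ⟨act x₀ (d ≫ α), ?_⟩
  show x = act (act x₀ (d ≫ α)) ρ
  rw [act_act, hcan]
  exact hx


/-! ## The degeneracy congruence generated by a morphism -/

inductive Step {X Z : SSet.{0}} (q : X ⟶ Z) : ∀ ⦃n : SimplexCategory⦄,
    X.obj (op n) → X.obj (op n) → Prop where
  | mk {n : SimplexCategory} {k : ℕ} (i : Fin (k + 1)) (w : X.obj (op (⦋k+1⦌ : SimplexCategory)))
      (θ : n ⟶ (⦋k+1⦌ : SimplexCategory)) (d : (⦋k⦌ : SimplexCategory) ⟶ (⦋k+1⦌ : SimplexCategory))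
      (hd : d ≫ SimplexCategory.σ i = 𝟙 (⦋k⦌ : SimplexCategory))
      (hw : IsSigmaDegenerate Z (SimplexCategory.σ i) (q.app (op (⦋k+1⦌ : SimplexCategory)) w)) :
      Step q (act w θ) (act w (θ ≫ SimplexCategory.σ i ≫ d))

def Cong {X Z : SSet.{0}} (q : X ⟶ Z) {n : SimplexCategory} (x y : X.obj (op n)) : Prop :=
  Relation.EqvGen (fun a b => Step q a b) x y

lemma Cong.refl {X Z : SSet.{0}} (q : X ⟶ Z) {n : SimplexCategory} (x : X.obj (op n)) :
    Cong q x x := Relation.EqvGen.refl x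

lemma Cong.symm {X Z : SSet.{0}} {q : X ⟶ Z} {n : SimplexCategory} {x y : X.obj (op n)}
    (h : Cong q x y) : Cong q y x := Relation.EqvGen.symm _ _ h

lemma Cong.trans {X Z : SSet.{0}} {q : X ⟶ Z} {n : SimplexCategory} {x y z : X.obj (op n)}
    (h : Cong q x y) (h' : Cong q y z) : Cong q x z := Relation.EqvGen.trans _ _ _ h h'

lemma Cong.of_step {X Z : SSet.{0}} {q : X ⟶ Z} {n : SimplexCategory} {x y : X.obj (op n)}
    (h : Step q x y) : Cong q x y := Relation.EqvGen.rel _ _ h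

lemma Step.act {X Z : SSet.{0}} {q : X ⟶ Z} {n n' : SimplexCategory} {x y : X.obj (op n)}
    (h : Step q x y) (φ : n' ⟶ n) : Step q (act x φ) (act y φ) := by
  cases h with
  | mk i w θ d hd hw =>
    rw [act_act, act_act, ← Category.assoc φ θ]
    exact Step.mk i w (φ ≫ θ) d hd hw

lemma Cong.act {X Z : SSet.{0}} {q : X ⟶ Z} {n n' : SimplexCategory} {x y : X.obj (op n)}
    (h : Cong q x y) (φ : n' ⟶ n) : Cong q (act x φ) (act y φ) := by
  induction h with
  | rel a b hab => exact Cong.of_step (hab.act φ)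
  | refl a => exact Cong.refl q _
  | symm a b hab ih => exact ih.symm
  | trans a b c h1 h2 ih1 ih2 => exact ih1.trans ih2

lemma Step.q_eq {X Z : SSet.{0}} {q : X ⟶ Z} {n : SimplexCategory} {x y : X.obj (op n)}
    (h : Step q x y) : q.app (op n) x = q.app (op n) y := by
  cases h with
  | mk i w θ d hd hw =>
    rw [act_nat, act_nat, act_absorb hd hw θ]

lemma Cong.q_eq {X Z : SSet.{0}} {q : X ⟶ Z} {n : SimplexCategory} {x y : X.obj (op n)}
    (h : Cong q x y) : q.app (op n) x = q.app (op n) y := by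
  induction h with
  | rel a b hab => exact hab.q_eq
  | refl a => rfl
  | symm a b hab ih => exact ih.symm
  | trans a b c h1 h2 ih1 ih2 => exact ih1.trans ih2

/-- Any morphism `u` fitting into a commuting square over a degeneracy detecting morphism
coequalizes the congruence. -/
lemma Cong.u_eq {X Z Af Bf : SSet.{0}} {q : X ⟶ Z} {f : Af ⟶ Bf} (hf : DegeneracyDetecting f)
    {u : X ⟶ Af} {v : Z ⟶ Bf} (hsq : u ≫ f = q ≫ v) {n : SimplexCategory}
    {x y : X.obj (op n)} (h : Cong q x y) : u.app (op n) x = u.app (op n) y := by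
  induction h with
  | rel a b hab =>
    cases hab with
    | mk i w θ d hd hw =>
      rw [act_nat, act_nat]
      have hfu : f.app _ (u.app _ w) = v.app _ (q.app _ w) := by
        have := congrArg (fun t : X ⟶ Bf => t.app (op (⦋_+1⦌ : SimplexCategory)) w) hsq
        exact this
      have hvq : IsSigmaDegenerate Bf (SimplexCategory.σ i) (v.app _ (q.app _ w)) := by
        obtain ⟨z, hz⟩ := hw
        refine ⟨v.app _ z, ?_⟩
        rw [hz]
        exact act_nat v z (SimplexCategory.σ i)
      have huw : IsSigmaDegenerate Af (SimplexCategory.σ i) (u.app _ w) :=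
        detecting_reflects_sigma f hf (SimplexCategory.σ i) inferInstance (u.app _ w)
          (by rw [hfu]; exact hvq)
      exact (act_absorb hd huw θ).symm
  | refl a => rfl
  | symm a b hab ih => exact ih.symm
  | trans a b c h1 h2 ih1 ih2 => exact ih1.trans ih2

/-! ## The concrete characterization of degeneracy quotients -/

def IsDegQuot {X Z : SSet.{0}} (q : X ⟶ Z) : Prop :=
  (∀ n : SimplexCategory, Function.Surjective (q.app (op n))) ∧
  (∀ (n : SimplexCategory) (x y : X.obj (op n)),
    q.app (op n) x = q.app (op n) y → Cong q x y)

/-- Concrete degeneracy quotients have the unique lifting property. -/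
theorem degQuot_of_isDegQuot {X Z : SSet.{0}} (q : X ⟶ Z) (hq : IsDegQuot q) :
    DegeneracyQuotient q := by
  obtain ⟨hsurj, hker⟩ := hq
  intro Af Bf f hf u v hsq
  -- the key pointwise fact
  have key : ∀ (n : SimplexCategoryᵒᵖ) (x y : X.obj n), q.app n x = q.app n y →
      u.app n x = u.app n y := by
    intro n x y h
    induction n using Opposite.rec with | _ n =>
    exact Cong.u_eq hf hsq (hker n x y h)
  -- define the lift
  have hsurj' : ∀ (n : SimplexCategoryᵒᵖ), Function.Surjective (q.app n) := by
    intro n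
    induction n using Opposite.rec with | _ n =>
    exact hsurj n
  let sec : ∀ (n : SimplexCategoryᵒᵖ), Z.obj n → X.obj n :=
    fun n => Function.surjInv (hsurj' n)
  have hsec : ∀ (n : SimplexCategoryᵒᵖ) (z : Z.obj n), q.app n (sec n z) = z :=
    fun n => Function.surjInv_eq (hsurj' n)
  have huniq : ∀ (n : SimplexCategoryᵒᵖ) (x : X.obj n), u.app n x = u.app n (sec n (q.app n x)) :=
    fun n x => key n x _ (by rw [hsec])
  refine ⟨⟨fun n => ↾(fun z => u.app n (sec n z)), ?_⟩, ⟨?_, ?_⟩, ?_⟩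
  · -- naturality
    intro c c' φ
    ext z
    obtain ⟨x, rfl⟩ := hsurj' c z
    show u.app c' (sec c' (Z.map φ (q.app c x))) = Af.map φ (u.app c (sec c (q.app c x)))
    rw [← huniq c x]
    have h1 : Z.map φ (q.app c x) = q.app c' (X.map φ x) := (NatTrans.naturality_apply q φ x).symm
    rw [h1, ← huniq c' (X.map φ x)]
    exact NatTrans.naturality_apply u φ x
  · -- q ≫ l = u
    apply NatTrans.ext
    funext n
    ext x
    exact (huniq n x).symm
  · -- l ≫ f = v
    apply NatTrans.ext
    funext n
    ext z
    obtain ⟨x, rfl⟩ := hsurj' n z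
    show f.app n (u.app n (sec n (q.app n x))) = v.app n (q.app n x)
    rw [← huniq n x]
    exact congrArg (fun t : X ⟶ Bf => t.app n x) hsq
  · -- uniqueness
    rintro l' ⟨hl1, -⟩
    apply NatTrans.ext
    funext n
    ext z
    obtain ⟨x, rfl⟩ := hsurj' n z
    have h1 : l'.app n (q.app n x) = u.app n x := congrArg (fun t : X ⟶ Af => t.app n x) hl1
    show l'.app n (q.app n x) = u.app n (sec n (q.app n x))
    rw [h1, huniq n x]


/-! ## The quotient simplicial set by the degeneracy congruence -/

def QSSet {X Z : SSet.{0}} (q : X ⟶ Z) : SSet.{0} where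
  obj c := Quot (fun (x y : X.obj c) => Step q (n := c.unop) x y)
  map φ := ↾(Quot.map (X.map φ) (fun x y h => h.act φ.unop))
  map_id c := by
    ext ξ
    induction ξ using Quot.ind with | _ x =>
    show Quot.mk _ (X.map (𝟙 c) x) = Quot.mk _ x
    rw [FunctorToTypes.map_id_apply]
  map_comp φ ψ := by
    ext ξ
    induction ξ using Quot.ind with | _ x =>
    show Quot.mk _ (X.map (φ ≫ ψ) x) = Quot.mk _ (X.map ψ (X.map φ x))
    rw [FunctorToTypes.map_comp_apply]

def cmap {X Z : SSet.{0}} (q : X ⟶ Z) : X ⟶ QSSet q where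
  app c := ↾(Quot.mk _)
  naturality c c' φ := rfl

def rmap {X Z : SSet.{0}} (q : X ⟶ Z) : QSSet q ⟶ Z where
  app c := ↾(Quot.lift (fun x => q.app c x) (fun x y h => h.q_eq))
  naturality c c' φ := by
    ext ξ
    induction ξ using Quot.ind with | _ x =>
    exact NatTrans.naturality_apply q φ x

lemma rmap_detecting {X Z : SSet.{0}} (q : X ⟶ Z) : DegeneracyDetecting (rmap q) := by
  intro n ξ hdeg
  induction ξ using Quot.ind with | _ x =>
  induction n using SimplexCategory.rec with | _ N =>
  obtain ⟨m, ρ, hepi, hni, z, hz⟩ := hdeg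
  match N with
  | 0 =>
    have := epi_len_lt ρ hepi hni
    simp at this
  | (k + 1) =>
    have hninj : ¬Function.Injective ρ.toOrderHom :=
      fun hinj => hni (SimplexCategory.isIso_of_bijective
        ⟨hinj, SimplexCategory.epi_iff_surjective.mp hepi⟩)
    obtain ⟨i, γ, hfac⟩ := SimplexCategory.eq_σ_comp_of_not_injective ρ hninj
    -- q x is σ i degenerate
    have hqx : IsSigmaDegenerate Z (SimplexCategory.σ i) (q.app _ x) := by
      refine ⟨act z γ, ?_⟩
      show _ = act (act z γ) (SimplexCategory.σ i)
      rw [act_act, ← hfac]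
      exact hz
    have hstep : Step q (act x (𝟙 _))
        (act x (𝟙 _ ≫ SimplexCategory.σ i ≫ SimplexCategory.δ i.castSucc)) :=
      Step.mk i x (𝟙 _) (SimplexCategory.δ i.castSucc) SimplexCategory.δ_comp_σ_self hqx
    refine ⟨⦋k⦌, SimplexCategory.σ i, inferInstance, sigma_not_isIso i,
      Quot.mk _ (act x (SimplexCategory.δ i.castSucc)), ?_⟩
    show Quot.mk _ x = Quot.mk _ (X.map (SimplexCategory.σ i).op (act x (SimplexCategory.δ i.castSucc)))
    have h2 : (X.map (SimplexCategory.σ i).op (act x (SimplexCategory.δ i.castSucc)))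
        = act x (𝟙 _ ≫ SimplexCategory.σ i ≫ SimplexCategory.δ i.castSucc) := by
      show act (act x (SimplexCategory.δ i.castSucc)) (SimplexCategory.σ i) = _
      rw [act_act, Category.id_comp]
    rw [h2]
    have h3 := Quot.sound (r := fun a b => Step q a b) hstep
    rw [act_id] at h3
    exact h3

/-- Degeneracy quotients satisfy the concrete characterization. -/
theorem isDegQuot_of_degQuot {X Z : SSet.{0}} (q : X ⟶ Z) (hq : DegeneracyQuotient q) :
    IsDegQuot q := by
  have hsq : cmap q ≫ rmap q = q ≫ 𝟙 Z := by
    apply NatTrans.ext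
    funext c
    ext x
    show q.app c x = (q ≫ 𝟙 Z).app c x
    simp
  obtain ⟨l, ⟨hl1, hl2⟩, -⟩ := hq (rmap q) (rmap_detecting q) (cmap q) (𝟙 Z) hsq
  constructor
  · intro n z
    obtain ⟨x, hx⟩ := Quot.exists_rep (l.app (op n) z)
    refine ⟨x, ?_⟩
    have h5 : (rmap q).app (op n) (l.app (op n) z) = z :=
      congrArg (fun t : Z ⟶ Z => t.app (op n) z) hl2
    rw [← hx] at h5
    exact h5
  · intro n x y h
    have h1 : l.app (op n) (q.app (op n) x) = (cmap q).app (op n) x :=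
      congrArg (fun t : X ⟶ QSSet q => t.app (op n) x) hl1
    have h2 : l.app (op n) (q.app (op n) y) = (cmap q).app (op n) y :=
      congrArg (fun t : X ⟶ QSSet q => t.app (op n) y) hl1
    have : (Quot.mk _ x : (QSSet q).obj (op n)) = Quot.mk _ y := by
      show (cmap q).app (op n) x = (cmap q).app (op n) y
      rw [← h1, ← h2]
      show l.app (op n) (q.app (op n) x) = l.app (op n) (q.app (op n) y)
      rw [h]
    exact Quot.eq.mp this


/-! ## Explicit pullback of simplicial sets -/

section Pullback

variable {A B B' : SSet.{0}} (p : A ⟶ B) (g : B' ⟶ B)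

def PB : SSet.{0} where
  obj c := { ab : A.obj c × B'.obj c // p.app c ab.1 = g.app c ab.2 }
  map {c c'} φ := ↾(fun x => ⟨(A.map φ x.1.1, B'.map φ x.1.2), by
    show p.app c' (A.map φ x.1.1) = g.app c' (B'.map φ x.1.2)
    rw [FunctorToTypes.naturality, FunctorToTypes.naturality, x.2]⟩)
  map_id c := by
    refine ConcreteCategory.hom_ext _ _ fun x => ?_
    apply Subtype.ext
    show (A.map (𝟙 c) x.1.1, B'.map (𝟙 c) x.1.2) = x.1
    rw [FunctorToTypes.map_id_apply, FunctorToTypes.map_id_apply]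
  map_comp φ ψ := by
    refine ConcreteCategory.hom_ext _ _ fun x => ?_
    apply Subtype.ext
    show (A.map (φ ≫ ψ) x.1.1, B'.map (φ ≫ ψ) x.1.2) = _
    rw [FunctorToTypes.map_comp_apply, FunctorToTypes.map_comp_apply]
    rfl

def pbFst : PB p g ⟶ A where
  app c := ↾(fun x => x.1.1)
  naturality c c' φ := rfl

def pbSnd : PB p g ⟶ B' where
  app c := ↾(fun x => x.1.2)
  naturality c c' φ := rfl

lemma act_eq_of_comp_eq {X : SSet.{0}} {n c m : SimplexCategory} {ρ : c ⟶ m}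
    {z : X.obj (op c)} (hz : IsSigmaDegenerate X ρ z) {φ ψ : n ⟶ c}
    (h : φ ≫ ρ = ψ ≫ ρ) : act z φ = act z ψ := by
  obtain ⟨y, rfl⟩ := hz
  show act (act y ρ) φ = act (act y ρ) ψ
  rw [act_act, act_act, h]

/-- The single-step prism lemma: two cells of the pullback with the same second component,
whose first components are translates of a common cell `w` along maps `φ ψ` differing in one
point and agreeing after the collapse `σ i` that degenerates `p w`, are congruent. -/
lemma prism_single {n : SimplexCategory} {k : ℕ} (i : Fin (k + 1))
    (w : A.obj (op (⦋k+1⦌ : SimplexCategory)))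
    (hw : IsSigmaDegenerate B (SimplexCategory.σ i) (p.app _ w))
    (φ ψ : n ⟶ (⦋k+1⦌ : SimplexCategory)) (t₀ : Fin (n.len + 1))
    (hle : φ.toOrderHom t₀ ≤ ψ.toOrderHom t₀)
    (hcomp : φ ≫ SimplexCategory.σ i = ψ ≫ SimplexCategory.σ i)
    (honly : ∀ t, t ≠ t₀ → φ.toOrderHom t = ψ.toOrderHom t)
    (b' : B'.obj (op n)) (hb : g.app (op n) b' = act (p.app _ w) φ)
    (h₁ : p.app (op n) (act w φ) = g.app (op n) b')
    (h₂ : p.app (op n) (act w ψ) = g.app (op n) b') :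
    Cong (pbSnd p g) (⟨(act w φ, b'), h₁⟩ : (PB p g).obj (op n)) ⟨(act w ψ, b'), h₂⟩ := by
  have hlep : ∀ t, φ.toOrderHom t ≤ ψ.toOrderHom t := by
    intro t
    rcases eq_or_ne t t₀ with rfl | h
    · exact hle
    · rw [honly t h]
  have hcomp' : ∀ s, (SimplexCategory.σ i).toOrderHom (φ.toOrderHom s)
      = (SimplexCategory.σ i).toOrderHom (ψ.toOrderHom s) := by
    intro s
    have := congrArg (fun h : n ⟶ (⦋k⦌ : SimplexCategory) => h.toOrderHom s) hcomp
    simpa using this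
  -- the prism map Θ
  set Θfun : Fin (n.len + 1 + 1) → Fin (k + 1 + 1) := fun t =>
    if t ≤ t₀.castSucc then φ.toOrderHom (t₀.predAbove t) else ψ.toOrderHom (t₀.predAbove t)
    with hΘfun
  have hmono : Monotone Θfun := by
    intro t t' htt'
    have hpa := Fin.predAbove_right_monotone t₀ htt'
    by_cases hc1 : t ≤ t₀.castSucc
    · by_cases hc2 : t' ≤ t₀.castSucc
      · simp only [hΘfun, if_pos hc1, if_pos hc2]
        exact φ.toOrderHom.monotone hpa
      · simp only [hΘfun, if_pos hc1, if_neg hc2]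
        exact le_trans (φ.toOrderHom.monotone hpa) (hlep _)
    · have hc2 : ¬ t' ≤ t₀.castSucc := fun hcon => hc1 (htt'.trans hcon)
      simp only [hΘfun, if_neg hc1, if_neg hc2]
      exact ψ.toOrderHom.monotone hpa
  set Θ : (⦋n.len + 1⦌ : SimplexCategory) ⟶ (⦋k+1⦌ : SimplexCategory) :=
    SimplexCategory.mkHom ⟨Θfun, hmono⟩ with hΘdef
  -- key computations with faces
  have E1 : (SimplexCategory.δ t₀.succ : n ⟶ (⦋n.len + 1⦌ : SimplexCategory)) ≫ Θ = φ := by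
    apply SimplexCategory.Hom.ext
    ext t : 2
    show Θfun (t₀.succ.succAbove t) = φ.toOrderHom t
    rcases le_or_gt t t₀ with h | h
    · rw [Fin.succAbove_of_castSucc_lt _ _ (by rwa [Fin.castSucc_lt_succ_iff])]
      have hle2 : t.castSucc ≤ t₀.castSucc := by rwa [Fin.castSucc_le_castSucc_iff]
      simp only [hΘfun, if_pos hle2]
      rw [Fin.predAbove_of_le_castSucc _ _ hle2, Fin.castPred_castSucc]
    · rw [Fin.succAbove_of_le_castSucc _ _ (by rwa [Fin.succ_le_castSucc_iff])]
      have hgt : ¬ t.succ ≤ t₀.castSucc :=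
        not_le.mpr ((Fin.castSucc_lt_succ_iff.mpr h.le))
      simp only [hΘfun, if_neg hgt]
      rw [Fin.predAbove_of_castSucc_lt _ _ (Fin.castSucc_lt_succ_iff.mpr h.le), Fin.pred_succ]
      exact (honly t (by exact fun hc => absurd (hc ▸ h) (lt_irrefl _))).symm
  have E2 : (SimplexCategory.δ t₀.castSucc : n ⟶ (⦋n.len + 1⦌ : SimplexCategory)) ≫ Θ = ψ := by
    apply SimplexCategory.Hom.ext
    ext t : 2
    show Θfun (t₀.castSucc.succAbove t) = ψ.toOrderHom t
    rcases lt_or_ge t t₀ with h | h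
    · rw [Fin.succAbove_of_castSucc_lt _ _ (by rwa [Fin.castSucc_lt_castSucc_iff])]
      have hle2 : t.castSucc ≤ t₀.castSucc := by
        rw [Fin.castSucc_le_castSucc_iff]; exact h.le
      simp only [hΘfun, if_pos hle2]
      rw [Fin.predAbove_of_le_castSucc _ _ hle2, Fin.castPred_castSucc]
      exact honly t (by exact fun hc => absurd (hc ▸ h) (lt_irrefl _))
    · rw [Fin.succAbove_of_le_castSucc _ _ (by rwa [Fin.castSucc_le_castSucc_iff])]
      have hgt : ¬ t.succ ≤ t₀.castSucc :=
        not_le.mpr (Fin.castSucc_lt_succ_iff.mpr h)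
      simp only [hΘfun, if_neg hgt]
      rw [Fin.predAbove_of_castSucc_lt _ _ (Fin.castSucc_lt_succ_iff.mpr h), Fin.pred_succ]
  -- Θ composed with σ i agrees with σ t₀ ≫ φ ≫ σ i
  have E3 : Θ ≫ SimplexCategory.σ i
      = ((SimplexCategory.σ t₀ : (⦋n.len + 1⦌ : SimplexCategory) ⟶ n) ≫ φ) ≫ SimplexCategory.σ i := by
    apply SimplexCategory.Hom.ext
    ext t : 2
    show (SimplexCategory.σ i).toOrderHom (Θfun t)
      = (SimplexCategory.σ i).toOrderHom (φ.toOrderHom (t₀.predAbove t))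
    by_cases hc : t ≤ t₀.castSucc
    · simp only [hΘfun, if_pos hc]
    · simp only [hΘfun, if_neg hc]
      exact (hcomp' (t₀.predAbove t)).symm
  -- The prism cell
  have hWmem : p.app (op (⦋n.len + 1⦌ : SimplexCategory)) (act w Θ)
      = g.app _ (act b' (SimplexCategory.σ t₀ : (⦋n.len + 1⦌ : SimplexCategory) ⟶ n)) := by
    rw [act_nat, act_nat, hb, act_act]
    exact act_eq_of_comp_eq hw E3
  set W : (PB p g).obj (op (⦋n.len + 1⦌ : SimplexCategory)) := ⟨(act w Θ, act b' _), hWmem⟩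
    with hWdef
  have hWdeg : IsSigmaDegenerate B' (SimplexCategory.σ t₀)
      ((pbSnd p g).app _ W) := ⟨b', rfl⟩
  have hstep := Step.mk (q := pbSnd p g) t₀ W
    (SimplexCategory.δ t₀.succ : n ⟶ (⦋n.len + 1⦌ : SimplexCategory))
    (SimplexCategory.δ t₀.castSucc) SimplexCategory.δ_comp_σ_self hWdeg
  have hsimp : (SimplexCategory.δ t₀.succ : n ⟶ (⦋n.len + 1⦌ : SimplexCategory))
      ≫ SimplexCategory.σ t₀ ≫ SimplexCategory.δ t₀.castSucc
      = (SimplexCategory.δ t₀.castSucc : n ⟶ (⦋n.len + 1⦌ : SimplexCategory)) := by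
    rw [← Category.assoc, SimplexCategory.δ_comp_σ_succ, Category.id_comp]
  rw [hsimp] at hstep
  have hL : act W (SimplexCategory.δ t₀.succ : n ⟶ (⦋n.len + 1⦌ : SimplexCategory))
      = (⟨(act w φ, b'), h₁⟩ : (PB p g).obj (op n)) := by
    apply Subtype.ext
    show (act (act w Θ) _, act (act b' _) _) = (act w φ, b')
    rw [act_act, act_act, E1, SimplexCategory.δ_comp_σ_succ]
    exact congrArg (fun z => (act w φ, z)) (act_id (X := B') (a := ⦋n.len⦌) b')
  have hR : act W (SimplexCategory.δ t₀.castSucc : n ⟶ (⦋n.len + 1⦌ : SimplexCategory))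
      = (⟨(act w ψ, b'), h₂⟩ : (PB p g).obj (op n)) := by
    apply Subtype.ext
    show (act (act w Θ) _, act (act b' _) _) = (act w ψ, b')
    rw [act_act, act_act, E2, SimplexCategory.δ_comp_σ_self]
    exact congrArg (fun z => (act w ψ, z)) (act_id (X := B') (a := ⦋n.len⦌) b')
  rw [hL, hR] at hstep
  exact Cong.of_step hstep

lemma hpw_helper {n : SimplexCategory} {k : ℕ} {i : Fin (k + 1)}
    {w : A.obj (op (⦋k+1⦌ : SimplexCategory))}
    (hw : IsSigmaDegenerate B (SimplexCategory.σ i) (p.app _ w))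
    {φ χ : n ⟶ (⦋k+1⦌ : SimplexCategory)} (h : χ ≫ SimplexCategory.σ i = φ ≫ SimplexCategory.σ i)
    {b' : B'.obj (op n)} (h₁ : p.app (op n) (act w φ) = g.app (op n) b') :
    p.app (op n) (act w χ) = g.app (op n) b' := by
  rw [act_nat, act_eq_of_comp_eq hw h, ← act_nat]
  exact h₁

lemma prism_le {k : ℕ} (i : Fin (k + 1)) (w : A.obj (op (⦋k+1⦌ : SimplexCategory)))
    (hw : IsSigmaDegenerate B (SimplexCategory.σ i) (p.app _ w)) (N : ℕ) :
    ∀ {n : SimplexCategory} (φ ψ : n ⟶ (⦋k+1⦌ : SimplexCategory)),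
      (Finset.univ.filter fun t => φ.toOrderHom t ≠ ψ.toOrderHom t).card ≤ N →
      (∀ t, φ.toOrderHom t ≤ ψ.toOrderHom t) →
      φ ≫ SimplexCategory.σ i = ψ ≫ SimplexCategory.σ i →
      ∀ (b' : B'.obj (op n)), g.app (op n) b' = act (p.app _ w) φ →
      ∀ (h₁ : p.app (op n) (act w φ) = g.app (op n) b')
        (h₂ : p.app (op n) (act w ψ) = g.app (op n) b'),
      Cong (pbSnd p g) (⟨(act w φ, b'), h₁⟩ : (PB p g).obj (op n)) ⟨(act w ψ, b'), h₂⟩ := by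
  induction N with
  | zero =>
    intro n φ ψ hcard hle hcomp b' hb h₁ h₂
    obtain rfl : φ = ψ := by
      apply SimplexCategory.Hom.ext
      ext t : 2
      by_contra hc
      have : t ∈ Finset.univ.filter fun t => φ.toOrderHom t ≠ ψ.toOrderHom t := by
        simp only [Finset.mem_filter, Finset.mem_univ, true_and]
        exact hc
      rw [Finset.card_eq_zero.mp (Nat.le_zero.mp hcard)] at this
      exact absurd this (Finset.notMem_empty t)
    exact Cong.refl _ _
  | succ N IH =>
    intro n φ ψ hcard hle hcomp b' hb h₁ h₂
    by_cases hne : φ = ψ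
    · subst hne
      exact Cong.refl _ _
    · set D := Finset.univ.filter fun t => φ.toOrderHom t ≠ ψ.toOrderHom t with hD
      have hDne : D.Nonempty := by
        by_contra hc
        refine hne (SimplexCategory.Hom.ext _ _ ?_)
        ext t : 2
        by_contra hc2
        refine hc ⟨t, ?_⟩
        simp only [hD, Finset.mem_filter, Finset.mem_univ, true_and]
        exact hc2
      set t₀ := D.max' hDne with ht₀
      have ht₀mem : t₀ ∈ D := D.max'_mem hDne
      have ht₀ne : φ.toOrderHom t₀ ≠ ψ.toOrderHom t₀ := by
        have := ht₀mem
        rw [hD, Finset.mem_filter] at this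
        exact this.2
      have hgt : ∀ t, t₀ < t → φ.toOrderHom t = ψ.toOrderHom t := by
        intro t ht
        by_contra hc
        have : t ∈ D := by
          simp only [hD, Finset.mem_filter, Finset.mem_univ, true_and]
          exact hc
        exact absurd (D.le_max' t this) (not_le.mpr ht)
      -- the intermediate map
      set ψ'fun : Fin (n.len + 1) → Fin (k + 1 + 1) := fun t =>
        if t = t₀ then ψ.toOrderHom t else φ.toOrderHom t with hψ'fun
      have hψ'mono : Monotone ψ'fun := by
        intro t t' htt'
        rcases eq_or_lt_of_le htt' with rfl | hlt
        · exact le_rfl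
        by_cases hc1 : t = t₀
        · have hlt0 : t₀ < t' := by rw [← hc1]; exact hlt
          have hc2 : t' ≠ t₀ := by rw [← hc1]; exact ne_of_gt hlt
          simp only [hψ'fun, if_pos hc1, if_neg hc2]
          rw [hc1, hgt t' hlt0]
          exact ψ.toOrderHom.monotone hlt0.le
        · by_cases hc2 : t' = t₀
          · simp only [hψ'fun, if_neg hc1, if_pos hc2]
            have htle : t ≤ t₀ := by rw [← hc2]; exact htt'
            rw [hc2]
            exact le_trans (φ.toOrderHom.monotone htle) (hle t₀)
          · simp only [hψ'fun, if_neg hc1, if_neg hc2]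
            exact φ.toOrderHom.monotone htt'
      set ψ' : n ⟶ (⦋k+1⦌ : SimplexCategory) := SimplexCategory.Hom.mk ⟨ψ'fun, hψ'mono⟩
        with hψ'
      have hψ'eval : ∀ t, ψ'.toOrderHom t = ψ'fun t := fun t => rfl
      have honly : ∀ t, t ≠ t₀ → φ.toOrderHom t = ψ'.toOrderHom t := by
        intro t ht
        rw [hψ'eval]
        simp only [hψ'fun, if_neg ht]
      have hcompt : ∀ t, (SimplexCategory.σ i).toOrderHom (φ.toOrderHom t)
          = (SimplexCategory.σ i).toOrderHom (ψ.toOrderHom t) := by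
        intro t
        have := congrArg (fun h : n ⟶ (⦋k⦌ : SimplexCategory) => h.toOrderHom t) hcomp
        simpa using this
      have hcomp1 : φ ≫ SimplexCategory.σ i = ψ' ≫ SimplexCategory.σ i := by
        apply SimplexCategory.Hom.ext
        ext t : 2
        show (SimplexCategory.σ i).toOrderHom (φ.toOrderHom t)
          = (SimplexCategory.σ i).toOrderHom (ψ'.toOrderHom t)
        rw [hψ'eval]
        by_cases hc : t = t₀
        · simp only [hψ'fun, if_pos hc]
          rw [hc]
          exact hcompt t₀
        · simp only [hψ'fun, if_neg hc]
      have h₂' : p.app (op n) (act w ψ') = g.app (op n) b' :=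
        hpw_helper p g hw hcomp1.symm h₁
      have step1 : Cong (pbSnd p g) (⟨(act w φ, b'), h₁⟩ : (PB p g).obj (op n))
          ⟨(act w ψ', b'), h₂'⟩ := by
        refine prism_single p g i w hw φ ψ' t₀ ?_ hcomp1 honly b' hb h₁ h₂'
        rw [hψ'eval]
        simp only [hψ'fun, if_pos rfl]
        exact hle t₀
      have hcomp2 : ψ' ≫ SimplexCategory.σ i = ψ ≫ SimplexCategory.σ i :=
        hcomp1.symm.trans hcomp
      have hb2 : g.app (op n) b' = act (p.app _ w) ψ' := by
        rw [hb]
        exact act_eq_of_comp_eq hw hcomp1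
      have hcard2 : (Finset.univ.filter
          fun t => ψ'.toOrderHom t ≠ ψ.toOrderHom t).card ≤ N := by
        have hsub : (Finset.univ.filter fun t => ψ'.toOrderHom t ≠ ψ.toOrderHom t)
            ⊆ D.erase t₀ := by
          intro t ht
          rw [Finset.mem_filter] at ht
          rw [hψ'eval] at ht
          rcases eq_or_ne t t₀ with rfl | htne
          · simp only [hψ'fun, if_pos rfl] at ht
            exact absurd rfl ht.2
          · refine Finset.mem_erase.mpr ⟨htne, ?_⟩
            simp only [hψ'fun, if_neg htne] at ht
            simp only [hD, Finset.mem_filter, Finset.mem_univ, true_and]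
            exact ht.2
        calc (Finset.univ.filter fun t => ψ'.toOrderHom t ≠ ψ.toOrderHom t).card
            ≤ (D.erase t₀).card := Finset.card_le_card hsub
          _ ≤ D.card - 1 := by rw [Finset.card_erase_of_mem ht₀mem]
          _ ≤ N := by
              have := Finset.card_pos.mpr hDne
              omega
      have hle2 : ∀ t, ψ'.toOrderHom t ≤ ψ.toOrderHom t := by
        intro t
        rw [hψ'eval]
        rcases eq_or_ne t t₀ with rfl | htne
        · simp only [hψ'fun, if_pos rfl]; exact le_rfl
        · simp only [hψ'fun, if_neg htne]; exact hle t
      exact step1.trans (IH ψ' ψ hcard2 hle2 hcomp2 b' hb2 h₂' h₂)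

/-- Two cells of the pullback over the same second component, whose first components are
translates of `w` along maps agreeing after the collapse, are congruent. -/
lemma prism_pair {n : SimplexCategory} {k : ℕ} (i : Fin (k + 1))
    (w : A.obj (op (⦋k+1⦌ : SimplexCategory)))
    (hw : IsSigmaDegenerate B (SimplexCategory.σ i) (p.app _ w))
    (φ ψ : n ⟶ (⦋k+1⦌ : SimplexCategory))
    (hcomp : φ ≫ SimplexCategory.σ i = ψ ≫ SimplexCategory.σ i)
    (b' : B'.obj (op n)) (hb : g.app (op n) b' = act (p.app _ w) φ)
    (h₁ : p.app (op n) (act w φ) = g.app (op n) b')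
    (h₂ : p.app (op n) (act w ψ) = g.app (op n) b') :
    Cong (pbSnd p g) (⟨(act w φ, b'), h₁⟩ : (PB p g).obj (op n)) ⟨(act w ψ, b'), h₂⟩ := by
  have hχmono : Monotone (fun t => max (φ.toOrderHom t) (ψ.toOrderHom t)) := fun t t' h =>
    max_le_max (φ.toOrderHom.monotone h) (ψ.toOrderHom.monotone h)
  set χ : n ⟶ (⦋k+1⦌ : SimplexCategory) := SimplexCategory.Hom.mk ⟨_, hχmono⟩ with hχ
  have hcompt : ∀ t, (SimplexCategory.σ i).toOrderHom (φ.toOrderHom t)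
      = (SimplexCategory.σ i).toOrderHom (ψ.toOrderHom t) := by
    intro t
    have := congrArg (fun h : n ⟶ (⦋k⦌ : SimplexCategory) => h.toOrderHom t) hcomp
    simpa using this
  have hcompχ : φ ≫ SimplexCategory.σ i = χ ≫ SimplexCategory.σ i := by
    apply SimplexCategory.Hom.ext
    ext t : 2
    show (SimplexCategory.σ i).toOrderHom (φ.toOrderHom t)
      = (SimplexCategory.σ i).toOrderHom (max (φ.toOrderHom t) (ψ.toOrderHom t))
    rw [(SimplexCategory.σ i).toOrderHom.monotone.map_max, ← hcompt t, max_self]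
  have hcompχ' : ψ ≫ SimplexCategory.σ i = χ ≫ SimplexCategory.σ i :=
    hcomp.symm.trans hcompχ
  have hχmem : p.app (op n) (act w χ) = g.app (op n) b' :=
    hpw_helper p g hw hcompχ.symm h₁
  have hbψ : g.app (op n) b' = act (p.app _ w) ψ := by
    rw [hb]
    exact act_eq_of_comp_eq hw hcomp
  have c1 := prism_le p g i w hw (Fintype.card (Fin (n.len + 1))) φ χ
    (Finset.card_filter_le _ _ |>.trans (by rw [Finset.card_univ]))
    (fun t => le_max_left _ _) hcompχ b' hb h₁ hχmem
  have c2 := prism_le p g i w hw (Fintype.card (Fin (n.len + 1))) ψ χ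
    (Finset.card_filter_le _ _ |>.trans (by rw [Finset.card_univ]))
    (fun t => le_max_right _ _) hcompχ' b' hbψ h₂ hχmem
  exact c1.trans c2.symm

/-- Lifting the congruence of `p` to the pullback. -/
lemma cong_lift {n : SimplexCategory} {a a' : A.obj (op n)} (h : Cong p a a') :
    ∀ (b' : B'.obj (op n)) (h₁ : p.app (op n) a = g.app (op n) b')
      (h₂ : p.app (op n) a' = g.app (op n) b'),
    Cong (pbSnd p g) (⟨(a, b'), h₁⟩ : (PB p g).obj (op n)) ⟨(a', b'), h₂⟩ := by
  induction h with
  | rel x y hstep =>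
    cases hstep with
    | mk i w θ d hd hw =>
      intro b' h₁ h₂
      refine prism_pair p g i w hw θ (θ ≫ SimplexCategory.σ i ≫ d) ?_ b' ?_ h₁ h₂
      · rw [Category.assoc, Category.assoc, hd, Category.comp_id]
      · rw [← act_nat]
        exact h₁.symm
  | refl x =>
    intro b' h₁ h₂
    exact Cong.refl _ _
  | symm x y hxy ih =>
    intro b' h₁ h₂
    exact (ih b' h₂ h₁).symm
  | trans x y z hxy hyz ih1 ih2 =>
    intro b' h₁ h₂
    have hmid : p.app (op n) y = g.app (op n) b' := by
      rw [← Cong.q_eq hxy]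
      exact h₁
    exact (ih1 b' h₁ hmid).trans (ih2 b' hmid h₂)

/-- The concrete characterization is stable under pullback. -/
theorem isDegQuot_pbSnd (hp : IsDegQuot p) : IsDegQuot (pbSnd p g) := by
  constructor
  · intro n b'
    obtain ⟨a, ha⟩ := hp.1 n (g.app (op n) b')
    exact ⟨⟨(a, b'), ha⟩, rfl⟩
  · rintro n ⟨⟨a, b1⟩, hx⟩ ⟨⟨a2, b2⟩, hy⟩ h
    have hb : b1 = b2 := h
    subst hb
    have hpa : p.app (op n) a = p.app (op n) a2 := by rw [hx, hy]
    exact cong_lift p g (hp.2 n a a2 hpa) b1 hx hy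

/-- The explicit pullback cone is a limit cone. -/
def pbIsLimit : IsLimit (PullbackCone.mk (pbFst p g) (pbSnd p g)
    (by apply NatTrans.ext; funext c; ext x; exact x.2)) := by
  apply PullbackCone.IsLimit.mk
  case lift =>
    intro s
    exact {
      app := fun c => ↾(fun wc => ⟨(s.fst.app c wc, s.snd.app c wc), by
        have := congrArg (fun t : s.pt ⟶ B => t.app c wc) s.condition
        exact this⟩)
      naturality := fun c c' φ => by
        refine ConcreteCategory.hom_ext _ _ fun wc => ?_
        apply Subtype.ext
        show (s.fst.app c' (s.pt.map φ wc), s.snd.app c' (s.pt.map φ wc)) = _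
        rw [NatTrans.naturality_apply s.fst, NatTrans.naturality_apply s.snd]
        rfl }
  case fac_left =>
    intro s
    apply NatTrans.ext
    funext c
    ext wc
    rfl
  case fac_right =>
    intro s
    apply NatTrans.ext
    funext c
    ext wc
    rfl
  case uniq =>
    intro s m hm1 hm2
    apply NatTrans.ext
    funext c
    refine ConcreteCategory.hom_ext _ _ fun wc => ?_
    apply Subtype.ext
    have e1 : (pbFst p g).app c (m.app c wc) = s.fst.app c wc :=
      congrArg (fun t : s.pt ⟶ A => t.app c wc) hm1
    have e2 : (pbSnd p g).app c (m.app c wc) = s.snd.app c wc :=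
      congrArg (fun t : s.pt ⟶ B' => t.app c wc) hm2
    exact Prod.ext e1 e2

end Pullback

/-- Degeneracy quotients are stable under precomposition with an isomorphism. -/
lemma degQuot_comp_iso {P P' Z : SSet.{0}} (e : P ≅ P') (q : P' ⟶ Z)
    (hq : DegeneracyQuotient q) : DegeneracyQuotient (e.hom ≫ q) := by
  intro Af Bf f hf u v hsq
  obtain ⟨l, ⟨hl1, hl2⟩, huniq⟩ := hq f hf (e.inv ≫ u) v (by
    rw [Category.assoc, hsq, ← Category.assoc, ← Category.assoc, e.inv_hom_id,
      Category.id_comp])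
  refine ⟨l, ⟨?_, hl2⟩, ?_⟩
  · rw [Category.assoc, hl1, ← Category.assoc, e.hom_inv_id, Category.id_comp]
  · rintro l' ⟨ha, hb⟩
    refine huniq l' ⟨?_, hb⟩
    rw [← ha, ← Category.assoc, ← Category.assoc, e.inv_hom_id, Category.id_comp]

end DQAux





/-- The class of degeneracy quotients of simplicial sets is stable under pullback: if
`p : A ⟶ B` is a degeneracy quotient and `g : B' ⟶ B` is any morphism, then the projection
`A ×_B B' ⟶ B'` is again a degeneracy quotient. -/
theorem degeneracyQuotient_stable_under_pullback {A B B' : SSet.{0}}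
    (p : A ⟶ B) (hp : DegeneracyQuotient p) (g : B' ⟶ B) :
    DegeneracyQuotient (pullback.snd p g) := by
  have hpd : DQAux.IsDegQuot p := DQAux.isDegQuot_of_degQuot p hp
  have h2 : DegeneracyQuotient (DQAux.pbSnd p g) :=
    DQAux.degQuot_of_isDegQuot _ (DQAux.isDegQuot_pbSnd p g hpd)
  let iso : pullback p g ≅ DQAux.PB p g :=
    limit.isoLimitCone ⟨_, DQAux.pbIsLimit p g⟩
  have hsnd : pullback.snd p g = iso.hom ≫ DQAux.pbSnd p g := by
    have h := limit.isoLimitCone_hom_π ⟨_, DQAux.pbIsLimit p g⟩ WalkingCospan.right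
    exact h.symm
  rw [hsnd]
  exact DQAux.degQuot_comp_iso iso (DQAux.pbSnd p g) h2
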